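/- If [κ', κ''] ∩ KEYS = ∅, then the sum of used_t over all receiver times t ≥ 0 such that (s+t) mod n ∈ Y_{k,s,0} is at most l_{k,s,0} + 1. -/

import Mathlib

open scoped ENNReal

/-- `revBit k x` is the `k`-bit reversal of `x`:
if `x = (x_{k-1}, …, x_0)₂` then `revBit k x = (x_0, …, x_{k-1})₂`. -/
def revBit (k x : ℕ) : ℕ := ∑ i ∈ Finset.range k, (x / 2 ^ i % 2) * 2 ^ (k - 1 - i)

/-- `lmax k x = max { l ≤ k | x mod 2^l = 0 }`. -/
def lmax (k x : ℕ) : ℕ := Nat.findGreatest (fun l => x % 2 ^ l = 0) k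

/-- The sequence of time slots `t_{k,s,i}`. -/
def tSlot (k s : ℕ) : ℕ → ℕ
  | 0 => s
  | i + 1 => (tSlot k s i + 2 ^ lmax k (tSlot k s i)) % 2 ^ k

/-- `lVal k s i = l_{k,s,i} = max { l ≤ k | t_{k,s,i} mod 2^l = 0 }`. -/
def lVal (k s i : ℕ) : ℕ := lmax k (tSlot k s i)

/-- `lastIdx k s = min { i ≥ 0 | t_{k,s,i} = 0 }`. -/
noncomputable def lastIdx (k s : ℕ) : ℕ := sInf {i | tSlot k s i = 0}

/-- The segment of time slots `Y_{k,s,i}`: for `i < last` it is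
`[[t_{k,s,i}, t_{k,s,i+1} - 1]]` and for `i = last` it is `[[0, 2^k - 1]]`. -/
noncomputable def Yseg (k s i : ℕ) : Set ℕ :=
  if i < lastIdx k s then Set.Icc (tSlot k s i) (tSlot k s (i + 1) - 1)
  else Set.Icc 0 (2 ^ k - 1)

/-- State `(lb_t, ub_t)` of the receiver's protocol searching for keys in `[a, b]`,
started at broadcaster slot `s`, where `key : ℤ → EReal` is the (extended) key
sequence with `key (-1) = ⊥` and `key (2^k) = ⊤`.  Initially `(lb_0, ub_0) = (0, 2^k - 1)`.
At receiver time `t`, with `x_t = rev_k((s + t) mod 2^k)`, if `lb_t ≤ x_t ≤ ub_t`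
then: if `key x_t < a` then `lb_{t+1} = x_t + 1`; if `b < key x_t` then
`ub_{t+1} = x_t - 1`; otherwise the state is unchanged. -/
noncomputable def rboState (k s : ℕ) (key : ℤ → EReal) (a b : ℝ) : ℕ → ℤ × ℤ
  | 0 => (0, 2 ^ k - 1)
  | t + 1 =>
    let p := rboState k s key a b t
    let x : ℤ := revBit k ((s + t) % 2 ^ k)
    if p.1 ≤ x ∧ x ≤ p.2 then
      if key x < (a : EReal) then (x + 1, p.2)
      else if (b : EReal) < key x then (p.1, x - 1)
      else p
    else p

/-- `lb_t`. -/
noncomputable def lb (k s : ℕ) (key : ℤ → EReal) (a b : ℝ) (t : ℕ) : ℤ :=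
  (rboState k s key a b t).1

/-- `ub_t`. -/
noncomputable def ub (k s : ℕ) (key : ℤ → EReal) (a b : ℝ) (t : ℕ) : ℤ :=
  (rboState k s key a b t).2

/-- `used_t = 1` if the receiver wakes up at receiver time `t`,
i.e. if `lb_t ≤ rev_k((s+t) mod 2^k) ≤ ub_t`; otherwise `used_t = 0`. -/
noncomputable def used (k s : ℕ) (key : ℤ → EReal) (a b : ℝ) (t : ℕ) : ℕ :=
  if lb k s key a b t ≤ (revBit k ((s + t) % 2 ^ k) : ℤ) ∧
     (revBit k ((s + t) % 2 ^ k) : ℤ) ≤ ub k s key a b t then 1 else 0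

lemma revBit_succ (k x : ℕ) : revBit (k+1) x = (x % 2) * 2^k + revBit k (x/2) := by
  rw [revBit, Finset.sum_range_succ', revBit]
  have h : ∀ i, x / 2^(i+1) % 2 * 2^(k+1-1-(i+1)) = (x/2)/2^i % 2 * 2^(k-1-i) := by
    intro i
    rw [Nat.div_div_eq_div_mul]
    congr 2
    · rw [pow_succ]; ring
    · omega
  rw [Finset.sum_congr rfl (fun i _ => h i)]
  simp [add_comm]

lemma revBit_zero (x : ℕ) : revBit 0 x = 0 := by simp [revBit]

lemma revBit_lt (k x : ℕ) : revBit k x < 2^k := by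
  induction k generalizing x with
  | zero => simp [revBit_zero]
  | succ k ih =>
    rw [revBit_succ]
    have h1 : x % 2 ≤ 1 := by omega
    have h2 := ih (x/2)
    have h3 : x % 2 * 2^k ≤ 1 * 2^k := Nat.mul_le_mul_right _ h1
    have h4 : (2:ℕ)^(k+1) = 2^k + 2^k := by ring
    omega

lemma revBit_succ' (k x : ℕ) : revBit (k+1) x = 2 * revBit k (x % 2^k) + (x / 2^k % 2) := by
  induction k generalizing x with
  | zero => simp [revBit_succ, revBit_zero]
  | succ k ih =>
    rw [revBit_succ, ih (x/2), revBit_succ k (x % 2^(k+1))]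
    have h1 : x / 2 % 2 ^ k = x % 2^(k+1) / 2 := by
      have := Nat.mod_mul_right_div_self x 2 (2^k)
      rw [← pow_succ'] at this
      omega
    have h2 : x % 2^(k+1) % 2 = x % 2 := by
      have h : (2:ℕ) ∣ 2^(k+1) := dvd_pow_self 2 (by omega)
      rw [Nat.mod_mod_of_dvd _ h]
    have h3 : x / 2 / 2^k = x / 2^(k+1) := by
      rw [Nat.div_div_eq_div_mul, pow_succ]; ring_nf
    rw [h1, h3, h2]
    ring

lemma revBit_revBit (k x : ℕ) (hx : x < 2^k) : revBit k (revBit k x) = x := by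
  induction k generalizing x with
  | zero => simp [revBit_zero]; omega
  | succ k ih =>
    rw [revBit_succ k x, revBit_succ']
    have hlt : revBit k (x/2) < 2^k := revBit_lt k _
    have harg : x % 2 * 2^k + revBit k (x/2) = revBit k (x/2) + 2^k * (x%2) := by ring
    have h1 : (x % 2 * 2^k + revBit k (x/2)) % 2^k = revBit k (x/2) := by
      rw [harg, Nat.add_mul_mod_self_left, Nat.mod_eq_of_lt hlt]
    have h2 : (x % 2 * 2^k + revBit k (x/2)) / 2^k = x % 2 := by
      rw [harg, Nat.add_mul_div_left _ _ (Nat.two_pow_pos k),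
        Nat.div_eq_of_lt hlt]
      omega
    rw [h1, h2, ih (x/2) (by omega)]
    omega

lemma revBit_zero' (k : ℕ) : revBit k 0 = 0 := by simp [revBit]

lemma revBit_split (l : ℕ) : ∀ k s r : ℕ, l ≤ k → 2^l ∣ s → r < 2^l →
    revBit k (s + r) = revBit k s + 2^(k-l) * revBit l r := by
  induction l with
  | zero =>
    intro k s r _ _ hr
    interval_cases r
    simp [revBit_zero]
  | succ l ih =>
    intro k s r hlk hs hr
    obtain ⟨k', rfl⟩ : ∃ k', k = k' + 1 := ⟨k - 1, by omega⟩
    have hs2 : s % 2 = 0 := by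
      have : (2:ℕ) ∣ s := dvd_trans (dvd_pow_self 2 (by omega)) hs
      omega
    have hdiv : (s + r) / 2 = s / 2 + r / 2 := by omega
    have hmod : (s + r) % 2 = r % 2 := by omega
    have hs' : 2^l ∣ s / 2 := by
      obtain ⟨c, rfl⟩ := hs
      have he : (2:ℕ)^(l+1)*c = (2^l*c)*2 := by ring
      exact ⟨c, by rw [he, Nat.mul_div_cancel _ (by omega)]⟩
    have hr' : r / 2 < 2^l := by
      have : (2:ℕ)^(l+1) = 2^l * 2 := pow_succ 2 l
      omega
    rw [revBit_succ, revBit_succ k' s, revBit_succ l r, hdiv, hmod,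
      ih k' (s/2) (r/2) (by omega) hs' hr', hs2]
    have hp : (2:ℕ)^(k'+1-(l+1)) = 2^(k'-l) := by congr 1; omega
    have hp2 : (2:ℕ)^(k'-l) * 2^l = 2^k' := by rw [← pow_add]; congr 1; omega
    rw [hp, mul_add, show (2:ℕ)^(k'-l) * (r % 2 * 2^l) = 2^(k'-l) * 2^l * (r%2) by ring,
      hp2]
    ring

lemma revBit_dvd_lt (l : ℕ) : ∀ k s : ℕ, l ≤ k → 2^l ∣ s → revBit k s < 2^(k-l) := by
  induction l with
  | zero => intro k s _ _; simpa using revBit_lt k s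
  | succ l ih =>
    intro k s hlk hs
    obtain ⟨k', rfl⟩ : ∃ k', k = k' + 1 := ⟨k - 1, by omega⟩
    have hs2 : s % 2 = 0 := by
      have : (2:ℕ) ∣ s := dvd_trans (dvd_pow_self 2 (by omega)) hs
      omega
    have hs' : 2^l ∣ s / 2 := by
      obtain ⟨c, rfl⟩ := hs
      have he : (2:ℕ)^(l+1)*c = (2^l*c)*2 := by ring
      exact ⟨c, by rw [he, Nat.mul_div_cancel _ (by omega)]⟩
    have h := ih k' (s/2) (by omega) hs'
    rw [revBit_succ, hs2]
    have he : k' + 1 - (l+1) = k' - l := by omega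
    rw [he]
    omega

lemma revBit_of_lt (j : ℕ) : ∀ l r : ℕ, j ≤ l → r < 2^j →
    revBit l r = 2^(l-j) * revBit j r := by
  induction j with
  | zero =>
    intro l r _ hr
    interval_cases r
    simp [revBit_zero']
  | succ j ih =>
    intro l r hjl hr
    obtain ⟨l', rfl⟩ : ∃ l', l = l' + 1 := ⟨l - 1, by omega⟩
    have hr' : r / 2 < 2^j := by
      have : (2:ℕ)^(j+1) = 2^j * 2 := pow_succ 2 j
      omega
    rw [revBit_succ, revBit_succ j r, ih l' (r/2) (by omega) hr']
    have hp : (2:ℕ)^(l'+1-(j+1)) = 2^(l'-j) := by congr 1; omega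
    have hp2 : (2:ℕ)^(l'-j) * 2^j = 2^l' := by rw [← pow_add]; congr 1; omega
    rw [hp, mul_add, show (2:ℕ)^(l'-j) * (r % 2 * 2^j) = 2^(l'-j) * 2^j * (r%2) by ring,
      hp2]
    ring

lemma revBit_odd (j r : ℕ) (h1 : 2^j ≤ r) (h2 : r < 2^(j+1)) : revBit (j+1) r % 2 = 1 := by
  rw [revBit_succ']
  have hd : r / 2^j = 1 := by
    have h3 : (2:ℕ)^(j+1) = 2^j * 2 := pow_succ 2 j
    rw [Nat.div_eq_sub_div (Nat.two_pow_pos j) h1]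
    rw [Nat.div_eq_of_lt (by omega)]
  rw [hd]
  omega

section proto

variable (k s : ℕ) (key : ℤ → EReal) (a b : ℝ)

lemma state_mono (t : ℕ) :
    lb k s key a b t ≤ lb k s key a b (t+1) ∧ ub k s key a b (t+1) ≤ ub k s key a b t := by
  simp only [lb, ub, rboState]
  split_ifs with h1 h2 h3 <;> simp_all <;> omega

lemma lb_mono : Monotone (lb k s key a b) :=
  monotone_nat_of_le_succ (fun t => (state_mono k s key a b t).1)

lemma ub_anti : Antitone (ub k s key a b) :=
  antitone_nat_of_succ_le (fun t => (state_mono k s key a b t).2)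

lemma ub_le_init (t : ℕ) : ub k s key a b t ≤ 2^k - 1 := by
  have := ub_anti k s key a b (Nat.zero_le t)
  simpa [ub, rboState] using this

lemma used_eq_one_iff (t : ℕ) : used k s key a b t = 1 ↔
    (lb k s key a b t ≤ (revBit k ((s + t) % 2 ^ k) : ℤ) ∧
     (revBit k ((s + t) % 2 ^ k) : ℤ) ≤ ub k s key a b t) := by
  unfold used
  split <;> simp_all

variable (hfin : ∀ i : ℤ, 0 ≤ i → i ≤ 2 ^ k - 1 → ∃ x : ℝ, key i = (x : EReal))
  (hempty : ∀ i : ℤ, 0 ≤ i → i ≤ 2 ^ k - 1 →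
      ¬((a : EReal) ≤ key i ∧ key i ≤ (b : EReal)))

include hfin hempty in
lemma excluded (t : ℕ) :
    ¬(lb k s key a b (t+1) ≤ (revBit k ((s + t) % 2 ^ k) : ℤ) ∧
      (revBit k ((s + t) % 2 ^ k) : ℤ) ≤ ub k s key a b (t+1)) := by
  set x : ℤ := (revBit k ((s + t) % 2 ^ k) : ℤ) with hx
  have hx0 : 0 ≤ x := Int.natCast_nonneg _
  have hx1 : x ≤ 2^k - 1 := by
    have := revBit_lt k ((s + t) % 2 ^ k)
    have : (revBit k ((s + t) % 2 ^ k) : ℤ) < 2^k := by exact_mod_cast this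
    omega
  simp only [lb, ub, rboState]
  split_ifs with h1 h2 h3
  · rintro ⟨hc1, hc2⟩; rw [← hx] at hc1 hc2; omega
  · rintro ⟨hc1, hc2⟩; rw [← hx] at hc1 hc2; omega
  · exfalso
    obtain ⟨c, hc⟩ := hfin x hx0 hx1
    apply hempty x hx0 hx1
    rw [hc]
    rw [hc] at h2 h3
    constructor
    · exact le_of_not_gt h2
    · exact le_of_not_gt h3
  · intro hcon
    exact h1 ⟨by rw [← hx]; exact hcon.1, by rw [← hx]; exact hcon.2⟩

include hfin hempty in
lemma used_eq_zero_of_earlier (t' t : ℕ) (h : t' < t)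
    (hxx : (s + t') % 2 ^ k = (s + t) % 2 ^ k) : used k s key a b t = 0 := by
  have hex := excluded k s key a b hfin hempty t'
  rw [hxx] at hex
  have h1 : lb k s key a b (t'+1) ≤ lb k s key a b t := lb_mono k s key a b (by omega)
  have h2 : ub k s key a b t ≤ ub k s key a b (t'+1) := ub_anti k s key a b (by omega : t' + 1 ≤ t)
  unfold used
  split_ifs with hc
  · exfalso; exact hex ⟨le_trans h1 hc.1, le_trans hc.2 h2⟩
  · rfl

end proto

lemma lmax_le (k x : ℕ) : lmax k x ≤ k := Nat.findGreatest_le k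

lemma lmax_dvd (k x : ℕ) : 2^(lmax k x) ∣ x :=
  Nat.dvd_of_mod_eq_zero
    (Nat.findGreatest_spec (P := fun l => x % 2^l = 0) (Nat.zero_le k) (by omega))

lemma lmax_zero (k : ℕ) : lmax k 0 = k :=
  le_antisymm (Nat.findGreatest_le k) (Nat.le_findGreatest le_rfl (by simp))

lemma tSlot_shift (k s i : ℕ) : tSlot k s (i+1) = tSlot k (tSlot k s 1) i := by
  induction i with
  | zero => rfl
  | succ i ih =>
    have h1 : tSlot k s (i+2) =
        (tSlot k s (i+1) + 2^(lmax k (tSlot k s (i+1)))) % 2^k := rfl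
    have h2 : tSlot k (tSlot k s 1) (i+1) =
        (tSlot k (tSlot k s 1) i + 2^(lmax k (tSlot k (tSlot k s 1) i))) % 2^k := rfl
    rw [h1, h2, ih]

lemma exists_tSlot_zero (k : ℕ) : ∀ d s, s < 2^k → 2^k ≤ s + d → ∃ i, tSlot k s i = 0 := by
  intro d
  induction d with
  | zero => intro s h1 h2; exact absurd h2 (by omega)
  | succ d ih =>
    intro s h1 h2
    by_cases h0 : s = 0
    · exact ⟨0, h0⟩
    · have hdl : 2^(lmax k s) ∣ s := lmax_dvd k s
      have hlk : lmax k s ≤ k := lmax_le k s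
      have hle : s + 2^(lmax k s) ≤ 2^k := by
        have hd2 : 2^(lmax k s) ∣ 2^k - s :=
          Nat.dvd_sub (pow_dvd_pow 2 hlk) hdl
        have := Nat.le_of_dvd (by omega) hd2
        omega
      have h1' : tSlot k s 1 = (s + 2^(lmax k s)) % 2^k := rfl
      rcases eq_or_lt_of_le hle with heq | hlt
      · exact ⟨1, by rw [h1', heq, Nat.mod_self]⟩
      · have h1'' : tSlot k s 1 = s + 2^(lmax k s) := by rw [h1', Nat.mod_eq_of_lt hlt]
        have hp : 0 < 2^(lmax k s) := Nat.two_pow_pos _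
        obtain ⟨i, hi⟩ := ih (s + 2^(lmax k s)) hlt (by omega)
        exact ⟨i + 1, by rw [tSlot_shift, h1'', hi]⟩

lemma lastIdx_pos (k s : ℕ) (hs : s < 2^k) (h0 : s ≠ 0) : 0 < lastIdx k s := by
  have hne : {i | tSlot k s i = 0}.Nonempty := exists_tSlot_zero k (2^k) s hs (by omega)
  rcases Nat.eq_zero_or_pos (lastIdx k s) with h | h
  swap
  · exact h
  · exfalso
    have := Nat.sInf_mem hne
    rw [show sInf {i | tSlot k s i = 0} = lastIdx k s from rfl, h] at this
    exact h0 this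

section main

variable (k l0 s : ℕ) (key : ℤ → EReal) (a b : ℝ)
variable (hfin : ∀ i : ℤ, 0 ≤ i → i ≤ 2 ^ k - 1 → ∃ x : ℝ, key i = (x : EReal))
  (hempty : ∀ i : ℤ, 0 ≤ i → i ≤ 2 ^ k - 1 →
      ¬((a : EReal) ≤ key i ∧ key i ≤ (b : EReal)))
  (hl0k : l0 ≤ k) (hsd : 2^l0 ∣ s) (hsn : s + 2^l0 ≤ 2^k)

include hfin hempty hl0k hsd hsn in
lemma excl_pt (r u : ℕ) (hr : r < 2^l0) (hu : u < 2^l0) (hru : revBit l0 u < r) :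
    ¬(lb k s key a b r ≤ ((revBit k s + 2^(k-l0) * u : ℕ) : ℤ) ∧
      ((revBit k s + 2^(k-l0) * u : ℕ) : ℤ) ≤ ub k s key a b r) := by
  have hX : (s + revBit l0 u) % 2^k = s + revBit l0 u := by
    have h1 : revBit l0 u < 2^l0 := revBit_lt l0 u
    exact Nat.mod_eq_of_lt (by omega)
  have hrev : revBit k (s + revBit l0 u) = revBit k s + 2^(k-l0) * revBit l0 (revBit l0 u) :=
    revBit_split l0 k s (revBit l0 u) hl0k hsd (revBit_lt l0 u)
  have hback : revBit l0 (revBit l0 u) = u := revBit_revBit l0 u hu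
  have hex := excluded k s key a b hfin hempty (revBit l0 u)
  rw [hX, hrev, hback] at hex
  intro hcon
  exact hex ⟨le_trans (lb_mono k s key a b (by omega)) hcon.1,
    le_trans hcon.2 (ub_anti k s key a b (by omega : revBit l0 u + 1 ≤ r))⟩

include hfin hempty hl0k hsd hsn in
lemma claimC (r j : ℕ) (hr : r < 2^l0) (hj1 : 2^j ≤ r) (hj2 : r < 2^(j+1))
    (hused : used k s key a b r = 1) :
    ((revBit k s : ℤ) + 2^(k-l0) * ((revBit l0 r : ℤ) - 2^(l0-(j+1))) < lb k s key a b r)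
    ∧ ((ub k s key a b r : ℤ) <
        (revBit k s : ℤ) + 2^(k-l0) * ((revBit l0 r : ℤ) + 2^(l0-(j+1)))) := by
  have hjl : j + 1 ≤ l0 := by
    by_contra hcon
    have : (2:ℕ)^l0 ≤ 2^j := Nat.pow_le_pow_right (by norm_num) (by omega)
    omega
  set c := revBit k s with hc
  set D := 2^(k-l0) with hD
  set m := revBit l0 r with hm
  set h := 2^(l0-(j+1)) with hh
  set o := revBit (j+1) r with ho
  have hmo : m = h * o := revBit_of_lt (j+1) l0 r hjl hj2
  have hoodd : o % 2 = 1 := revBit_odd j r hj1 hj2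
  have holt : o < 2^(j+1) := revBit_lt (j+1) r
  have hmlt : m < 2^l0 := revBit_lt l0 r
  have hhpos : 0 < h := Nat.two_pow_pos (l0-(j+1))
  have hDpos : 0 < D := Nat.two_pow_pos (k-l0)
  have h2h : h * 2 = 2^(l0-j) := by rw [hh, ← pow_succ]; congr 1; omega
  obtain ⟨w, hw⟩ : ∃ w, o = 2*w+1 := ⟨o/2, by omega⟩
  have hm2 : m = h*2*w + h := by rw [hmo, hw]; ring
  -- used at r gives interval membership of c + D*m
  have hXr : (s + r) % 2^k = s + r := Nat.mod_eq_of_lt (by omega)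
  have hrevr : revBit k (s + r) = c + D * m := revBit_split l0 k s r hl0k hsd hr
  have hused' := (used_eq_one_iff k s key a b r).mp hused
  rw [hXr, hrevr] at hused'
  obtain ⟨hl, hu⟩ := hused'
  constructor
  · -- lower claim, u = m - h
    have hum : h ≤ m := by omega
    have hdvd : ∃ w', (m - h : ℕ) = 2^(l0-j) * w' := ⟨w, by rw [← h2h]; omega⟩
    obtain ⟨w', hw'⟩ := hdvd
    have hulow : revBit l0 (m - h) < 2^j := by
      have := revBit_dvd_lt (l0-j) l0 (m-h) (by omega) ⟨w', hw'⟩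
      rwa [show l0-(l0-j) = j from by omega] at this
    have hexcl := excl_pt k l0 s key a b hfin hempty hl0k hsd hsn r (m - h)
      hr (by omega) (by omega)
    have hle2 : ((c + D * (m - h) : ℕ) : ℤ) ≤ ((c + D * m : ℕ) : ℤ) := by
      have h1 : D * (m - h) ≤ D * m := Nat.mul_le_mul_left D (by omega)
      have h2 : (c + D * (m - h) : ℕ) ≤ (c + D * m : ℕ) := by omega
      exact_mod_cast h2
    have hnot : ¬(lb k s key a b r ≤ ((c + D * (m-h) : ℕ) : ℤ)) := by
      intro hcon
      exact hexcl ⟨hcon, le_trans hle2 hu⟩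
    push_neg at hnot
    have hcast : ((c + D * (m - h) : ℕ) : ℤ) = (c:ℤ) + D * ((m:ℤ) - h) := by
      push_cast [Nat.cast_sub hum]
      ring
    rw [hcast] at hnot
    rwa [show ((D:ℕ):ℤ) = (2:ℤ)^(k-l0) from by rw [hD]; push_cast; ring,
      show ((h:ℕ):ℤ) = (2:ℤ)^(l0-(j+1)) from by rw [hh]; push_cast; ring] at hnot
  · -- upper claim, u' = m + h
    by_cases hcase : m + h < 2^l0
    · have hdvd : ∃ w', (m + h : ℕ) = 2^(l0-j) * w' := by
        refine ⟨w + 1, ?_⟩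
        rw [← h2h]
        have he : h*2*(w+1) = h*2*w + h*2 := by ring
        omega
      obtain ⟨w', hw'⟩ := hdvd
      have hulow : revBit l0 (m + h) < 2^j := by
        have := revBit_dvd_lt (l0-j) l0 (m+h) (by omega) ⟨w', hw'⟩
        rwa [show l0-(l0-j) = j from by omega] at this
      have hexcl := excl_pt k l0 s key a b hfin hempty hl0k hsd hsn r (m + h)
        hr hcase (by omega)
      have hle2 : ((c + D * m : ℕ) : ℤ) ≤ ((c + D * (m + h) : ℕ) : ℤ) := by
        have h1 : D * m ≤ D * (m + h) := Nat.mul_le_mul_left D (by omega)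
        have h2 : (c + D * m : ℕ) ≤ (c + D * (m + h) : ℕ) := by omega
        exact_mod_cast h2
      have hnot : ¬(((c + D * (m+h) : ℕ) : ℤ) ≤ ub k s key a b r) := by
        intro hcon
        exact hexcl ⟨le_trans hl hle2, hcon⟩
      push_neg at hnot
      have hcast : ((c + D * (m + h) : ℕ) : ℤ) = (c:ℤ) + D * ((m:ℤ) + h) := by
        push_cast
        ring
      rw [hcast] at hnot
      rwa [show ((D:ℕ):ℤ) = (2:ℤ)^(k-l0) from by rw [hD]; push_cast; ring,
        show ((h:ℕ):ℤ) = (2:ℤ)^(l0-(j+1)) from by rw [hh]; push_cast; ring] at hnot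
    · -- m + h ≥ 2^l0 : beyond the end
      have hub := ub_le_init k s key a b r
      have hDk : D * 2^l0 = 2^k := by rw [hD, ← pow_add]; congr 1; omega
      have h1 : (2^k : ℕ) ≤ D * (m + h) := by
        calc (2^k : ℕ) = D * 2^l0 := hDk.symm
        _ ≤ D * (m + h) := Nat.mul_le_mul_left D (by omega)
      have h2 : ((2:ℤ)^k : ℤ) ≤ (D:ℤ) * ((m:ℤ) + h) := by exact_mod_cast h1
      have hc0 : (0:ℤ) ≤ (c:ℤ) := Int.natCast_nonneg _
      have hk2 : ((2:ℤ))^k = ((2^k : ℕ) : ℤ) := by push_cast; ring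
      rw [show ((2:ℤ)^(k-l0)) = ((D:ℕ):ℤ) from by rw [hD]; push_cast; ring,
        show ((2:ℤ)^(l0-(j+1))) = ((h:ℕ):ℤ) from by rw [hh]; push_cast; ring]
      omega
  done

end main

lemma used_zero_or_one (k s : ℕ) (key : ℤ → EReal) (a b : ℝ) (t : ℕ) :
    used k s key a b t = 0 ∨ used k s key a b t = 1 := by
  unfold used; split <;> simp

section main2

variable (k l0 s : ℕ) (key : ℤ → EReal) (a b : ℝ)
variable (hfin : ∀ i : ℤ, 0 ≤ i → i ≤ 2 ^ k - 1 → ∃ x : ℝ, key i = (x : EReal))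
  (hempty : ∀ i : ℤ, 0 ≤ i → i ≤ 2 ^ k - 1 →
      ¬((a : EReal) ≤ key i ∧ key i ≤ (b : EReal)))
  (hl0k : l0 ≤ k) (hsd : 2^l0 ∣ s) (hsn : s + 2^l0 ≤ 2^k)

include hfin hempty hl0k hsd hsn in
lemma size_inj (r1 r2 : ℕ) (h12 : r1 ≤ r2) (hr1 : r1 < 2^l0) (hr2 : r2 < 2^l0)
    (hu1 : used k s key a b r1 = 1) (hu2 : used k s key a b r2 = 1)
    (hsz : Nat.size r1 = Nat.size r2) : r1 = r2 := by
  by_cases h0 : r2 = 0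
  · omega
  have h01 : r1 ≠ 0 := by
    intro h
    rw [h, Nat.size_zero] at hsz
    exact h0 (Nat.size_eq_zero.mp hsz.symm)
  set j := Nat.size r1 - 1 with hj
  have hjsz : Nat.size r1 = j + 1 := by
    have : 0 < Nat.size r1 := Nat.size_pos.mpr (Nat.pos_of_ne_zero h01)
    omega
  have hb1a : 2^j ≤ r1 := Nat.lt_size.mp (by omega)
  have hb1b : r1 < 2^(j+1) := Nat.size_le.mp (by omega)
  have hb2a : 2^j ≤ r2 := Nat.lt_size.mp (by omega)
  have hb2b : r2 < 2^(j+1) := Nat.size_le.mp (by omega)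
  have hjl : j + 1 ≤ l0 := by
    by_contra hcon
    have : (2:ℕ)^l0 ≤ 2^j := Nat.pow_le_pow_right (by norm_num) (by omega)
    omega
  have hC1 := claimC k l0 s key a b hfin hempty hl0k hsd hsn r1 j hr1 hb1a hb1b hu1
  -- membership of x_{r2}
  have hXr2 : (s + r2) % 2^k = s + r2 := Nat.mod_eq_of_lt (by omega)
  have hrev2 : revBit k (s + r2) = revBit k s + 2^(k-l0) * revBit l0 r2 :=
    revBit_split l0 k s r2 hl0k hsd hr2
  have hu2' := (used_eq_one_iff k s key a b r2).mp hu2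
  rw [hXr2, hrev2] at hu2'
  have hmono1 : lb k s key a b r1 ≤ lb k s key a b r2 := lb_mono k s key a b h12
  have hmono2 : ub k s key a b r2 ≤ ub k s key a b r1 := ub_anti k s key a b h12
  set c := revBit k s
  set m1 := revBit l0 r1 with hm1
  set m2 := revBit l0 r2 with hm2
  set h := 2^(l0-(j+1)) with hh
  have hcast2 : ((c + 2^(k-l0) * m2 : ℕ) : ℤ) = (c:ℤ) + (2:ℤ)^(k-l0) * (m2:ℤ) := by
    push_cast; ring
  rw [hcast2] at hu2'
  have hDpos : (0:ℤ) < (2:ℤ)^(k-l0) := by positivity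
  have e1 : (m1:ℤ) - (h:ℕ) < (m2:ℤ) := by
    have hchain : (c:ℤ) + (2:ℤ)^(k-l0) * ((m1:ℤ) - (2:ℤ)^(l0-(j+1))) <
        (c:ℤ) + (2:ℤ)^(k-l0) * (m2:ℤ) :=
      lt_of_lt_of_le (lt_of_lt_of_le hC1.1 hmono1) hu2'.1
    have h2 : (2:ℤ)^(k-l0) * ((m1:ℤ) - (2:ℤ)^(l0-(j+1))) < (2:ℤ)^(k-l0) * (m2:ℤ) := by omega
    have h3 := (mul_lt_mul_iff_right₀ hDpos).mp h2
    have h4 : ((h:ℕ):ℤ) = (2:ℤ)^(l0-(j+1)) := by rw [hh]; push_cast; ring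
    omega
  have e2 : (m2:ℤ) < (m1:ℤ) + (h:ℕ) := by
    have hchain : (c:ℤ) + (2:ℤ)^(k-l0) * (m2:ℤ) <
        (c:ℤ) + (2:ℤ)^(k-l0) * ((m1:ℤ) + (2:ℤ)^(l0-(j+1))) :=
      lt_of_le_of_lt (le_trans hu2'.2 hmono2) hC1.2
    have h2 : (2:ℤ)^(k-l0) * (m2:ℤ) < (2:ℤ)^(k-l0) * ((m1:ℤ) + (2:ℤ)^(l0-(j+1))) := by omega
    have h3 := (mul_lt_mul_iff_right₀ hDpos).mp h2
    have h4 : ((h:ℕ):ℤ) = (2:ℤ)^(l0-(j+1)) := by rw [hh]; push_cast; ring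
    omega
  have e1' : m1 < m2 + h := by omega
  have e2' : m2 < m1 + h := by omega
  -- m1, m2 odd multiples of h
  have hmo1 : m1 = h * revBit (j+1) r1 := revBit_of_lt (j+1) l0 r1 hjl hb1b
  have hmo2 : m2 = h * revBit (j+1) r2 := revBit_of_lt (j+1) l0 r2 hjl hb2b
  have ho1 : revBit (j+1) r1 % 2 = 1 := revBit_odd j r1 hb1a hb1b
  have ho2 : revBit (j+1) r2 % 2 = 1 := revBit_odd j r2 hb2a hb2b
  obtain ⟨w1, hw1⟩ : ∃ w, revBit (j+1) r1 = 2*w+1 := ⟨revBit (j+1) r1 / 2, by omega⟩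
  obtain ⟨w2, hw2⟩ : ∃ w, revBit (j+1) r2 = 2*w+1 := ⟨revBit (j+1) r2 / 2, by omega⟩
  have hhpos : 0 < h := Nat.two_pow_pos (l0-(j+1))
  have hm1' : m1 = h*2*w1 + h := by rw [hmo1, hw1]; ring
  have hm2' : m2 = h*2*w2 + h := by rw [hmo2, hw2]; ring
  have key1 : h*2*w1 + h < (h*2*w2 + h) + h := by
    rw [← hm1', ← hm2']; exact e1'
  have key2 : h*2*w2 + h < (h*2*w1 + h) + h := by
    rw [← hm2', ← hm1']; exact e2'
  have hw12 : w1 < w2 + 1 := by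
    apply Nat.lt_of_mul_lt_mul_left (a := h*2)
    have he : h*2*(w2+1) = h*2*w2 + h*2 := by ring
    omega
  have hw21 : w2 < w1 + 1 := by
    apply Nat.lt_of_mul_lt_mul_left (a := h*2)
    have he : h*2*(w1+1) = h*2*w1 + h*2 := by ring
    omega
  have hww : w1 = w2 := by omega
  have hmm : m1 = m2 := by rw [hm1', hm2', hww]
  have : r1 = r2 := by
    have i1 : revBit l0 m1 = r1 := by rw [hm1]; exact revBit_revBit l0 r1 hr1
    have i2 : revBit l0 m2 = r2 := by rw [hm2]; exact revBit_revBit l0 r2 hr2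
    rw [← i1, ← i2, hmm]
  exact this

end main2

/-- Lemma 5 (first-tree-Lemma): if `[a, b] ∩ KEYS = ∅`, then
`∑_{(s+t) mod n ∈ Y_{k,s,0}} used_t ≤ l_{k,s,0} + 1` (the sum, in `ℝ≥0∞`, over
all receiver times `t ≥ 0` with `(s+t) mod 2^k ∈ Y_{k,s,0}`). -/
theorem stmt_4 (k s : ℕ) (hs : s < 2 ^ k)
    (key : ℤ → EReal) (a b : ℝ) (hab : a ≤ b)
    (hbot : key (-1) = ⊥) (htop : key (2 ^ k) = ⊤)
    (hsorted : ∀ i : ℤ, -1 ≤ i → i ≤ 2 ^ k - 1 → key i ≤ key (i + 1))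
    (hfin : ∀ i : ℤ, 0 ≤ i → i ≤ 2 ^ k - 1 → ∃ x : ℝ, key i = (x : EReal))
    (hempty : ∀ i : ℤ, 0 ≤ i → i ≤ 2 ^ k - 1 →
      ¬((a : EReal) ≤ key i ∧ key i ≤ (b : EReal))) :
    (∑' t : ℕ, Set.indicator {t : ℕ | (s + t) % 2 ^ k ∈ Yseg k s 0}
        (fun t => ((used k s key a b t : ℕ) : ℝ≥0∞)) t) ≤
      (lVal k s 0 : ℝ≥0∞) + 1 := by
  have hl0eq : lVal k s 0 = lmax k s := by simp [lVal, tSlot]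
  rw [hl0eq]
  set l0 := lmax k s with hl0
  have hl0k : l0 ≤ k := lmax_le k s
  have hsd : 2^l0 ∣ s := lmax_dvd k s
  have hpow_le : (2:ℕ)^l0 ≤ 2^k := Nat.pow_le_pow_right (by norm_num) hl0k
  have hnpos : 0 < 2^k := Nat.two_pow_pos k
  have hsn : s + 2^l0 ≤ 2^k := by
    by_cases hs0 : s = 0
    · omega
    · have hd2 : 2^l0 ∣ 2^k - s := Nat.dvd_sub (pow_dvd_pow 2 hl0k) hsd
      have := Nat.le_of_dvd (by omega) hd2
      omega
  have hmodadd : ∀ t : ℕ, (s + t % 2^k) % 2^k = (s + t) % 2^k := by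
    intro t
    have h1 := Nat.mod_mod_of_dvd t (dvd_refl (2^k))
    rw [Nat.add_mod s (t % 2^k), Nat.add_mod s t, h1]
  by_cases hdeg : s ≠ 0 ∧ s + 2^l0 = 2^k
  · -- degenerate case : Yseg is empty
    obtain ⟨hs0, hdeq⟩ := hdeg
    have hpos : 0 < lastIdx k s := lastIdx_pos k s hs hs0
    have hY : Yseg k s 0 = Set.Icc s 0 := by
      rw [Yseg, if_pos hpos]
      have h1 : tSlot k s 0 = s := rfl
      have h2 : tSlot k s 1 = (s + 2^l0) % 2^k := rfl
      rw [h1, h2, hdeq, Nat.mod_self]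
    have hzero : ∀ t : ℕ, Set.indicator {t : ℕ | (s + t) % 2 ^ k ∈ Yseg k s 0}
        (fun t => ((used k s key a b t : ℕ) : ℝ≥0∞)) t = 0 := by
      intro t
      apply Set.indicator_of_notMem
      intro hmemt
      have : (s + t) % 2^k ∈ Yseg k s 0 := hmemt
      rw [hY, Set.mem_Icc] at this
      omega
    calc (∑' t : ℕ, Set.indicator {t : ℕ | (s + t) % 2 ^ k ∈ Yseg k s 0}
        (fun t => ((used k s key a b t : ℕ) : ℝ≥0∞)) t)
        = ∑' _ : ℕ, (0:ℝ≥0∞) := tsum_congr hzero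
    _ = 0 := tsum_zero
    _ ≤ _ := zero_le
  · -- main case
    have hmem : ∀ t, ((s + t) % 2^k ∈ Yseg k s 0) → t % 2^k < 2^l0 := by
      by_cases hs0 : s = 0
      · intro t _
        have hlk : l0 = k := by rw [hl0, hs0]; exact lmax_zero k
        rw [hlk]
        exact Nat.mod_lt _ hnpos
      · have hlt : s + 2^l0 < 2^k := by
          rcases eq_or_lt_of_le hsn with h | h
          · exact absurd ⟨hs0, h⟩ hdeg
          · exact h
        have hpos : 0 < lastIdx k s := lastIdx_pos k s hs hs0
        have hY : Yseg k s 0 = Set.Icc s (s + 2^l0 - 1) := by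
          rw [Yseg, if_pos hpos]
          have h1 : tSlot k s 0 = s := rfl
          have h2 : tSlot k s 1 = (s + 2^l0) % 2^k := rfl
          rw [h1, h2, Nat.mod_eq_of_lt hlt]
        intro t hmemt
        rw [hY, Set.mem_Icc] at hmemt
        rw [← hmodadd t] at hmemt
        have hrk : t % 2^k < 2^k := Nat.mod_lt _ hnpos
        rcases lt_or_ge (s + t % 2^k) (2^k) with hc | hc
        · rw [Nat.mod_eq_of_lt hc] at hmemt; omega
        · have heq2 : (s + t % 2^k) % 2^k = s + t % 2^k - 2^k := by
            rw [Nat.mod_eq_sub_mod hc, Nat.mod_eq_of_lt (by omega)]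
          rw [heq2] at hmemt; omega
    have hfirst : ∀ t, t % 2^k < 2^l0 → used k s key a b t = 1 → t < 2^l0 := by
      intro t hmod hu
      rcases lt_or_ge t (2^k) with hc | hc
      · rwa [Nat.mod_eq_of_lt hc] at hmod
      · exfalso
        have hrt : t % 2^k < t := lt_of_lt_of_le (Nat.mod_lt _ hnpos) hc
        have := used_eq_zero_of_earlier k s key a b hfin hempty (t % 2^k) t hrt (hmodadd t)
        omega
    set V := (Finset.range (2^l0)).filter (fun r => used k s key a b r = 1) with hVdef
    have hmemV : ∀ r, r ∈ V ↔ (r < 2^l0 ∧ used k s key a b r = 1) := by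
      intro r
      rw [hVdef, Finset.mem_filter, Finset.mem_range]
    have hzero : ∀ t ∉ V, Set.indicator {t : ℕ | (s + t) % 2 ^ k ∈ Yseg k s 0}
        (fun t => ((used k s key a b t : ℕ) : ℝ≥0∞)) t = 0 := by
      intro t ht
      by_cases hmemT : (s + t) % 2^k ∈ Yseg k s 0
      · have hu0 : used k s key a b t = 0 := by
          rcases used_zero_or_one k s key a b t with h | h
          · exact h
          · exact absurd ((hmemV t).mpr ⟨hfirst t (hmem t hmemT) h, h⟩) ht
        rw [Set.indicator_of_mem
          (show t ∈ {t : ℕ | (s + t) % 2 ^ k ∈ Yseg k s 0} from hmemT), hu0]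
        simp
      · exact Set.indicator_of_notMem
          (show t ∉ {t : ℕ | (s + t) % 2 ^ k ∈ Yseg k s 0} from hmemT)
          (fun t => ((used k s key a b t : ℕ) : ℝ≥0∞))
    have hcard : V.card ≤ l0 + 1 := by
      have hle : V.card ≤ (Finset.range (l0+1)).card := by
        apply Finset.card_le_card_of_injOn Nat.size
        · intro r hr
          rw [Finset.mem_coe, hmemV r] at hr
          rw [Finset.mem_coe, Finset.mem_range]
          have := Nat.size_le.mpr hr.1
          omega
        · intro r1 h1 r2 h2 hsz
          rw [Finset.mem_coe, hmemV r1] at h1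
          rw [Finset.mem_coe, hmemV r2] at h2
          rcases le_total r1 r2 with h12 | h12
          · exact size_inj k l0 s key a b hfin hempty hl0k hsd hsn r1 r2 h12
              h1.1 h2.1 h1.2 h2.2 hsz
          · exact (size_inj k l0 s key a b hfin hempty hl0k hsd hsn r2 r1 h12
              h2.1 h1.1 h2.2 h1.2 hsz.symm).symm
      simpa using hle
    rw [tsum_eq_sum hzero]
    have hle1 : (∑ t ∈ V, Set.indicator {t : ℕ | (s + t) % 2 ^ k ∈ Yseg k s 0}
        (fun t => ((used k s key a b t : ℕ) : ℝ≥0∞)) t) ≤ ∑ _t ∈ V, (1:ℝ≥0∞) := by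
      apply Finset.sum_le_sum
      intro t _
      by_cases hmemT : t ∈ {t : ℕ | (s + t) % 2 ^ k ∈ Yseg k s 0}
      · rw [Set.indicator_of_mem hmemT]
        rcases used_zero_or_one k s key a b t with h | h <;> rw [h] <;> simp
      · rw [Set.indicator_of_notMem hmemT]
        exact zero_le
    refine le_trans hle1 ?_
    rw [Finset.sum_const, nsmul_eq_mul, mul_one]
    have hc2 : ((V.card : ℕ) : ℝ≥0∞) ≤ ((l0 + 1 : ℕ) : ℝ≥0∞) := by
      exact_mod_cast hcard
    calc (V.card : ℝ≥0∞) ≤ ((l0 + 1 : ℕ) : ℝ≥0∞) := hc2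
    _ = (l0 : ℝ≥0∞) + 1 := by push_cast; ring
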